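/- Fix an integer T ≥ 1. The resetting closed loop satisfies quadratic performance specified by P if and only if the lifted reset system η(k+1) = Ã_r η(k) + B̃ w̃(k), z̃(k) = C̃_r η(k) + D̃ w̃(k) satisfies quadratic performance specified by P̃, where Ã_r := A^{T−1} A_r, B̃ := [A^{T−1}B, …, B], C̃_r ∈ ℝ^{Tq×n} has block rows C, C A_r, C A A_r, …, C A^{T−2} A_r, and D̃ is block lower triangular with (i,j) block D if i = j, C A^{i−j−1} B if i > j, 0 if i < j. -/

import Mathlib

open Matrix Filter Topology Kronecker

/-- Trajectories of a discrete-time LTI system. -/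
def IsTraj {St In Out : Type*} [Fintype St] [Fintype In] [Fintype Out]
    (A : Matrix St St ℝ) (B : Matrix St In ℝ) (C : Matrix Out St ℝ) (D : Matrix Out In ℝ)
    (x : ℕ → St → ℝ) (u : ℕ → In → ℝ) (y : ℕ → Out → ℝ) : Prop :=
  ∀ t : ℕ, x (t + 1) = A.mulVec (x t) + B.mulVec (u t) ∧
    y t = C.mulVec (x t) + D.mulVec (u t)

/-- The LTI system satisfies quadratic performance specified by `Π`. -/
def QuadPerf {St In Out : Type*} [Fintype St] [Fintype In] [Fintype Out]
    (A : Matrix St St ℝ) (B : Matrix St In ℝ) (C : Matrix Out St ℝ) (D : Matrix Out In ℝ)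
    (P : Matrix (In ⊕ Out) (In ⊕ Out) ℝ) : Prop :=
  (∀ x : ℕ → St → ℝ, (∀ t : ℕ, x (t + 1) = A.mulVec (x t)) →
      Tendsto x atTop (𝓝 0)) ∧
  ∃ ε > (0 : ℝ), ∀ x u y, IsTraj A B C D x u y → x 0 = 0 →
    Summable (fun t => u t ⬝ᵥ u t) →
    ∃ l : ℝ,
      Tendsto (fun N => ∑ t ∈ Finset.range N,
        Sum.elim (u t) (y t) ⬝ᵥ P.mulVec (Sum.elim (u t) (y t))) atTop (𝓝 l) ∧
      l ≤ -ε * ∑' t, u t ⬝ᵥ u t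

/-- Lifted input matrix `B̃ = [A^{T-1}B, A^{T-2}B, …, B]`. -/
noncomputable def Btil {St : Type*} [Fintype St] [DecidableEq St] {m : ℕ} (T : ℕ)
    (A : Matrix St St ℝ) (B : Matrix St (Fin m) ℝ) : Matrix St (Fin T × Fin m) ℝ :=
  Matrix.of fun i p => (A ^ (T - 1 - (p.1 : ℕ)) * B) i p.2

/-- Lifted feedthrough matrix `D̃`, block lower triangular with `(i,j)` block `D` if
`i = j`, `C A^{i-j-1} B` if `i > j`, and `0` if `i < j`. -/
noncomputable def Dtil {St : Type*} [Fintype St] [DecidableEq St] {m q : ℕ} (T : ℕ)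
    (A : Matrix St St ℝ) (B : Matrix St (Fin m) ℝ) (C : Matrix (Fin q) St ℝ)
    (D : Matrix (Fin q) (Fin m) ℝ) : Matrix (Fin T × Fin q) (Fin T × Fin m) ℝ :=
  Matrix.of fun p r =>
    if (p.1 : ℕ) = (r.1 : ℕ) then D p.2 r.2
    else if (r.1 : ℕ) < (p.1 : ℕ) then
      (C * A ^ ((p.1 : ℕ) - (r.1 : ℕ) - 1) * B) p.2 r.2
    else 0

/-- The lifted performance matrix `P̃ = [[I_T ⊗ Q, I_T ⊗ S], [I_T ⊗ Sᵀ, I_T ⊗ R]]`. -/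
noncomputable def Ptil {m q : ℕ} (T : ℕ) (Q : Matrix (Fin m) (Fin m) ℝ)
    (S : Matrix (Fin m) (Fin q) ℝ) (R : Matrix (Fin q) (Fin q) ℝ) :
    Matrix ((Fin T × Fin m) ⊕ (Fin T × Fin q)) ((Fin T × Fin m) ⊕ (Fin T × Fin q)) ℝ :=
  Matrix.fromBlocks ((1 : Matrix (Fin T) (Fin T) ℝ) ⊗ₖ Q)
    ((1 : Matrix (Fin T) (Fin T) ℝ) ⊗ₖ S)
    ((1 : Matrix (Fin T) (Fin T) ℝ) ⊗ₖ Sᵀ)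
    ((1 : Matrix (Fin T) (Fin T) ℝ) ⊗ₖ R)

/-- The uncertainty input matrix `B_u = [0; A_c]`. -/
noncomputable def Bu {n₁ n₂ : ℕ} (A : Matrix (Fin n₁ ⊕ Fin n₂) (Fin n₁ ⊕ Fin n₂) ℝ) :
    Matrix (Fin n₁ ⊕ Fin n₂) (Fin n₂) ℝ :=
  Matrix.of fun i j =>
    Sum.elim (fun _ : Fin n₁ => (0 : ℝ)) (fun i₂ => A (Sum.inr i₂) (Sum.inr j)) i

/-- The matrix `C_u = [0, I]` selecting the controller state. -/
noncomputable def Cu (n₁ n₂ : ℕ) : Matrix (Fin n₂) (Fin n₁ ⊕ Fin n₂) ℝ :=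
  Matrix.of fun i j =>
    Sum.elim (fun _ : Fin n₁ => (0 : ℝ)) (fun j₂ => if i = j₂ then 1 else 0) j

/-- The reset state matrix `A_r = A - B_u C_u`, i.e. `A` with its lower-right
controller block replaced by `0`. -/
noncomputable def Ar {n₁ n₂ : ℕ} (A : Matrix (Fin n₁ ⊕ Fin n₂) (Fin n₁ ⊕ Fin n₂) ℝ) :
    Matrix (Fin n₁ ⊕ Fin n₂) (Fin n₁ ⊕ Fin n₂) ℝ :=
  A - Bu A * Cu n₁ n₂

/-- The lifted reset output matrix `C̃_r` with block rows
`C, C A_r, C A A_r, …, C A^{T-2} A_r`. -/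
noncomputable def Crtil {n₁ n₂ q : ℕ} (T : ℕ)
    (A : Matrix (Fin n₁ ⊕ Fin n₂) (Fin n₁ ⊕ Fin n₂) ℝ)
    (C : Matrix (Fin q) (Fin n₁ ⊕ Fin n₂) ℝ) :
    Matrix (Fin T × Fin q) (Fin n₁ ⊕ Fin n₂) ℝ :=
  Matrix.of fun p j =>
    (if (p.1 : ℕ) = 0 then C else C * A ^ ((p.1 : ℕ) - 1) * Ar A) p.2 j

/-- Trajectories of the resetting closed loop: the controller state is reset to zero
every `T` steps. -/
def ResetTraj {n₁ n₂ m q : ℕ} (T : ℕ)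
    (A : Matrix (Fin n₁ ⊕ Fin n₂) (Fin n₁ ⊕ Fin n₂) ℝ)
    (B : Matrix (Fin n₁ ⊕ Fin n₂) (Fin m) ℝ)
    (C : Matrix (Fin q) (Fin n₁ ⊕ Fin n₂) ℝ) (D : Matrix (Fin q) (Fin m) ℝ)
    (ξ : ℕ → (Fin n₁ ⊕ Fin n₂) → ℝ) (w : ℕ → Fin m → ℝ) (z : ℕ → Fin q → ℝ) : Prop :=
  ∀ t : ℕ,
    ξ (t + 1) = (if T ∣ t then Ar A else A).mulVec (ξ t) + B.mulVec (w t) ∧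
    z t = C.mulVec (ξ t) + D.mulVec (w t)

/-- The (periodically time-varying) resetting closed loop satisfies quadratic
performance specified by `P`. -/
def ResetQuadPerf {n₁ n₂ m q : ℕ} (T : ℕ)
    (A : Matrix (Fin n₁ ⊕ Fin n₂) (Fin n₁ ⊕ Fin n₂) ℝ)
    (B : Matrix (Fin n₁ ⊕ Fin n₂) (Fin m) ℝ)
    (C : Matrix (Fin q) (Fin n₁ ⊕ Fin n₂) ℝ) (D : Matrix (Fin q) (Fin m) ℝ)
    (P : Matrix (Fin m ⊕ Fin q) (Fin m ⊕ Fin q) ℝ) : Prop :=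
  (∀ ξ : ℕ → (Fin n₁ ⊕ Fin n₂) → ℝ,
      (∀ t : ℕ, ξ (t + 1) = (if T ∣ t then Ar A else A).mulVec (ξ t)) →
      Tendsto ξ atTop (𝓝 0)) ∧
  ∃ ε > (0 : ℝ), ∀ ξ w z, ResetTraj T A B C D ξ w z → ξ 0 = 0 →
    Summable (fun t => w t ⬝ᵥ w t) →
    ∃ l : ℝ,
      Tendsto (fun N => ∑ t ∈ Finset.range N,
        Sum.elim (w t) (z t) ⬝ᵥ P.mulVec (Sum.elim (w t) (z t))) atTop (𝓝 l) ∧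
      l ≤ -ε * ∑' t, w t ⬝ᵥ w t

/-!
Within one period the reset loop is an LTI system started from the reset state, so sampling
the state at the reset instants `k T` and stacking the inputs and outputs of each period turns
reset trajectories into trajectories of the lifted system and back. Because `P̃` is block
diagonal, the lifted supply at step `k` is the sum of the original supplies over the `k`-th
period, and likewise for `‖w̃ k‖²`; hence the lifted and the original partial sums agree at
multiples of `T`. What remains is convergence of the original partial sums between multiples
of `T`, i.e. that the supply tends to zero. Stability of `Ã_r` gives `‖Ã_r ^ K‖ ≤ 1/2` for some
`K`, which makes the lifted state input-to-state stable: a square-summable input drives the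
state, hence the output and the supply, to zero.
-/

section Signals

variable {ι α : Type*}

def liftSignal (T : ℕ) (w : ℕ → ι → α) (k : ℕ) : Fin T × ι → α :=
  fun p => w (k * T + p.1) p.2

@[simp]
lemma liftSignal_zero [Zero α] (T k : ℕ) : liftSignal T (0 : ℕ → ι → α) k = 0 := rfl

lemma liftSignal_surjective {T : ℕ} (hT : 0 < T) :
    Function.Surjective (liftSignal (ι := ι) (α := α) T) := by
  have : NeZero T := ⟨hT.ne'⟩
  intro u
  refine ⟨fun t i => u (Nat.divModEquiv T t).1 ((Nat.divModEquiv T t).2, i), ?_⟩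
  funext k p
  have e : Nat.divModEquiv T (k * T + p.1) = (k, p.1) :=
    (Nat.divModEquiv T).apply_symm_apply (k, p.1)
  simp only [liftSignal, e]

lemma tendsto_mul_add_atTop {T : ℕ} (hT : 0 < T) (j : ℕ) :
    Tendsto (fun k => k * T + j) atTop atTop :=
  tendsto_atTop_mono (fun k => (Nat.le_mul_of_pos_right k hT).trans (Nat.le_add_right _ j))
    tendsto_id

lemma tendsto_liftSignal [TopologicalSpace α] [Zero α] {T : ℕ} {w : ℕ → ι → α}
    (hw : Tendsto w atTop (𝓝 0)) : Tendsto (liftSignal T w) atTop (𝓝 0) :=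
  tendsto_pi_nhds.2 fun p =>
    tendsto_pi_nhds.1 (hw.comp (tendsto_mul_add_atTop p.1.pos p.1)) p.2

lemma tendsto_of_tendsto_mul_add {X : Type*} {x : ℕ → X} {l : Filter X} {T : ℕ} (hT : 0 < T)
    (h : ∀ j < T, Tendsto (fun k => x (k * T + j)) atTop l) : Tendsto x atTop l := by
  intro s hs
  show ∀ᶠ t in atTop, x t ∈ s
  have hall : ∀ᶠ k in atTop, ∀ j ∈ Set.Iio T, x (k * T + j) ∈ s :=
    (Set.finite_Iio T).eventually_all.2 fun j hj => h j hj hs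
  filter_upwards [(Nat.tendsto_div_const_atTop hT.ne').eventually hall] with t ht
  simpa only [Nat.div_add_mod'] using ht (t % T) (Nat.mod_lt t hT)

lemma tendsto_zero_of_summable_dotProduct_self [Fintype ι] {w : ℕ → ι → ℝ}
    (hw : Summable fun t => w t ⬝ᵥ w t) : Tendsto w atTop (𝓝 0) := by
  have hsqrt : Tendsto (fun t => √(w t ⬝ᵥ w t)) atTop (𝓝 0) := by
    simpa [Function.comp_def] using (Real.continuous_sqrt.tendsto 0).comp hw.tendsto_atTop_zero
  refine tendsto_pi_nhds.2 fun i => squeeze_zero_norm (fun t => Real.abs_le_sqrt ?_) hsqrt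
  simpa [sq, dotProduct] using
    Finset.single_le_sum (fun j _ => mul_self_nonneg (w t j)) (Finset.mem_univ i)

end Signals

section BlockSum

variable {M : Type*} [AddCommMonoid M]

def blockSum (T : ℕ) (g : ℕ → M) (k : ℕ) : M := ∑ j : Fin T, g (k * T + j)

lemma sum_range_blockSum (T : ℕ) (g : ℕ → M) (K : ℕ) :
    ∑ k ∈ Finset.range K, blockSum T g k = ∑ t ∈ Finset.range (K * T), g t := by
  induction K with
  | zero => simp
  | succ K ih =>
    rw [Finset.sum_range_succ, ih, Nat.succ_mul, Finset.sum_range_add, blockSum,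
      Fin.sum_univ_eq_sum_range (fun j => g (K * T + j))]

lemma HasSum.blockSum [TopologicalSpace M] [RegularSpace M] [ContinuousAdd M] {g : ℕ → M}
    {a : M} {T : ℕ} (hT : 0 < T) (h : HasSum g a) : HasSum (blockSum T g) a := by
  have : NeZero T := ⟨hT.ne'⟩
  have h' := ((Nat.divModEquiv T).symm.hasSum_iff.2 h).prod_fiberwise fun k => hasSum_fintype _
  simp only [Function.comp_def, Nat.divModEquiv_symm_apply] at h'
  exact h'

lemma summable_blockSum_iff {g : ℕ → ℝ} {T : ℕ} (hT : 0 < T) (hg : 0 ≤ g) :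
    Summable (blockSum T g) ↔ Summable g := by
  have : NeZero T := ⟨hT.ne'⟩
  refine ⟨fun h => ?_, fun h => (h.hasSum.blockSum hT).summable⟩
  rw [← (Nat.divModEquiv T).symm.summable_iff]
  refine (summable_prod_of_nonneg fun _ => hg _).2 ⟨fun k => (hasSum_fintype _).summable, ?_⟩
  simp only [Nat.divModEquiv_symm_apply, tsum_fintype]
  exact h

lemma tendsto_sum_range_of_tendsto_sum_range_mul [TopologicalSpace M] [ContinuousAdd M]
    {g : ℕ → M} {T : ℕ} {l : M} (hT : 0 < T) (hg : Tendsto g atTop (𝓝 0))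
    (h : Tendsto (fun K => ∑ t ∈ Finset.range (K * T), g t) atTop (𝓝 l)) :
    Tendsto (fun N => ∑ t ∈ Finset.range N, g t) atTop (𝓝 l) := by
  refine tendsto_of_tendsto_mul_add hT fun j _ => ?_
  simp_rw [Finset.sum_range_add]
  simpa using h.add (tendsto_finsetSum (Finset.range j) fun i _ =>
    hg.comp (tendsto_mul_add_atTop hT i))

end BlockSum

lemma tendsto_zero_of_le_mul_add {a e : ℕ → ℝ} {c : ℝ} (ha : 0 ≤ a) (hc₀ : 0 ≤ c) (hc₁ : c < 1)
    (h : ∀ n, a (n + 1) ≤ c * a n + e n) (he : Tendsto e atTop (𝓝 0)) :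
    Tendsto a atTop (𝓝 0) := by
  refine tendsto_order.2 ⟨fun b hb => Eventually.of_forall fun n => hb.trans_le (ha n),
    fun ε hε => ?_⟩
  set δ := ε * (1 - c) / 2
  obtain ⟨N, hN⟩ := eventually_atTop.1 (he.eventually (gt_mem_nhds (by positivity : 0 < δ)))
  -- the geometric series `δ (1 + c + c² + ⋯)` bounds the accumulated forcing after time `N`
  have hbound : ∀ j, a (N + j) ≤ c ^ j * a N + δ / (1 - c) := by
    intro j
    induction j with
    | zero =>
      rw [add_zero, pow_zero, one_mul]
      exact le_add_of_nonneg_right (div_nonneg (by positivity) (sub_nonneg.2 hc₁.le))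
    | succ j ih =>
      calc a (N + (j + 1)) ≤ c * a (N + j) + e (N + j) := h (N + j)
        _ ≤ c * (c ^ j * a N + δ / (1 - c)) + δ :=
          add_le_add (mul_le_mul_of_nonneg_left ih hc₀) (hN _ (Nat.le_add_right N j)).le
        _ = c ^ (j + 1) * a N + δ / (1 - c) := by
          field_simp [(sub_pos.2 hc₁).ne']
          ring
  have hgeom : ∀ᶠ j in atTop, c ^ j * a N < ε / 2 := by
    refine ((tendsto_pow_atTop_nhds_zero_of_lt_one hc₀ hc₁).mul_const (a N)).eventually
      (gt_mem_nhds ?_)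
    simpa using half_pos hε
  obtain ⟨J, hJ⟩ := eventually_atTop.1 hgeom
  refine eventually_atTop.2 ⟨N + J, fun n hn => ?_⟩
  obtain ⟨j, rfl⟩ := Nat.exists_eq_add_of_le ((Nat.le_add_right N J).trans hn)
  have hδ : δ / (1 - c) = ε / 2 := by
    field_simp [(sub_pos.2 hc₁).ne']
    ring
  linarith [hbound j, hJ j (by omega)]

lemma tendsto_mulVec_zero {X ι κ : Type*} [Fintype κ] {l : Filter X} (M : Matrix ι κ ℝ)
    {f : X → κ → ℝ} (hf : Tendsto f l (𝓝 0)) : Tendsto (fun x => M *ᵥ f x) l (𝓝 0) := by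
  simpa [Function.comp_def] using
    ((continuous_const.matrix_mulVec continuous_id).tendsto' 0 (M *ᵥ 0) rfl).comp hf

def IsAsymptoticallyStable {St : Type*} [Fintype St] (A : Matrix St St ℝ) : Prop :=
  ∀ x : ℕ → St → ℝ, (∀ t, x (t + 1) = A *ᵥ x t) → Tendsto x atTop (𝓝 0)

section Stability

variable {St In : Type*} [Fintype St] [DecidableEq St] [Fintype In]

lemma IsAsymptoticallyStable.tendsto_pow {A : Matrix St St ℝ} (hA : IsAsymptoticallyStable A) :
    Tendsto (fun k => A ^ k) atTop (𝓝 0) := by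
  refine tendsto_pi_nhds.2 fun i => tendsto_pi_nhds.2 fun j => ?_
  have := hA (fun k => A ^ k *ᵥ Pi.single j 1) fun t => by rw [pow_succ', ← mulVec_mulVec]
  simpa [mulVec_single_one] using tendsto_pi_nhds.1 this i

lemma eq_pow_mulVec_add_sum {A : Matrix St St ℝ} {B : Matrix St In ℝ} {x : ℕ → St → ℝ}
    {u : ℕ → In → ℝ} (hx : ∀ t, x (t + 1) = A *ᵥ x t + B *ᵥ u t) (s n : ℕ) :
    x (s + n) = A ^ n *ᵥ x s + ∑ i ∈ Finset.range n, (A ^ (n - 1 - i) * B) *ᵥ u (s + i) := by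
  induction n with
  | zero => simp
  | succ n ih =>
    rw [← add_assoc, hx, ih, mulVec_add, mulVec_mulVec, ← pow_succ', mulVec_sum,
      Finset.sum_range_succ, Nat.add_sub_cancel, Nat.sub_self, pow_zero, Matrix.one_mul, add_assoc]
    congr 2
    refine Finset.sum_congr rfl fun i hi => ?_
    rw [mulVec_mulVec, ← Matrix.mul_assoc, ← pow_succ']
    congr 3
    have := Finset.mem_range.1 hi
    omega

theorem IsAsymptoticallyStable.tendsto_zero {A : Matrix St St ℝ} {B : Matrix St In ℝ}
    (hA : IsAsymptoticallyStable A) {x : ℕ → St → ℝ} {u : ℕ → In → ℝ}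
    (hx : ∀ t, x (t + 1) = A *ᵥ x t + B *ᵥ u t) (hu : Tendsto u atTop (𝓝 0)) :
    Tendsto x atTop (𝓝 0) := by
  let _ := Matrix.linftyOpNormedAddCommGroup (m := St) (n := St) (α := ℝ)
  have hnorm : ∀ᶠ k in atTop, ‖A ^ k‖ ≤ 1 / 2 :=
    (tendsto_zero_iff_norm_tendsto_zero.1 hA.tendsto_pow).eventually (ge_mem_nhds (by norm_num))
  obtain ⟨K, hAK, hK⟩ := (hnorm.and (eventually_gt_atTop 0)).exists
  set f : ℕ → St → ℝ := fun n => ∑ i ∈ Finset.range K, (A ^ (K - 1 - i) * B) *ᵥ u (n + i)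
  have hf : Tendsto f atTop (𝓝 0) := by
    simpa using tendsto_finsetSum (Finset.range K) fun i _ =>
      tendsto_mulVec_zero _ (hu.comp (tendsto_add_atTop_nat i))
  refine tendsto_of_tendsto_mul_add hK fun r _ => tendsto_zero_iff_norm_tendsto_zero.2 ?_
  refine tendsto_zero_of_le_mul_add (a := fun n => ‖x (n * K + r)‖)
    (e := fun n => ‖f (n * K + r)‖) (c := 1 / 2) (fun n => norm_nonneg _) (by norm_num)
    (by norm_num) (fun n => ?_) ?_
  · calc ‖x ((n + 1) * K + r)‖ = ‖A ^ K *ᵥ x (n * K + r) + f (n * K + r)‖ := by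
          rw [← eq_pow_mulVec_add_sum hx, add_mul, one_mul, add_right_comm]
      _ ≤ ‖A ^ K‖ * ‖x (n * K + r)‖ + ‖f (n * K + r)‖ :=
          (norm_add_le _ _).trans (add_le_add_left (linfty_opNorm_mulVec _ _) _)
      _ ≤ 1 / 2 * ‖x (n * K + r)‖ + ‖f (n * K + r)‖ := by gcongr
  · exact tendsto_zero_iff_norm_tendsto_zero.1 (hf.comp (tendsto_mul_add_atTop hK r))

end Stability

lemma IsTraj.unique {St In Out : Type*} [Fintype St] [Fintype In] [Fintype Out]
    {A : Matrix St St ℝ} {B : Matrix St In ℝ} {C : Matrix Out St ℝ} {D : Matrix Out In ℝ}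
    {x x' : ℕ → St → ℝ} {u : ℕ → In → ℝ} {y y' : ℕ → Out → ℝ} (h : IsTraj A B C D x u y)
    (h' : IsTraj A B C D x' u y') (h₀ : x 0 = x' 0) : x = x' ∧ y = y' := by
  obtain rfl : x = x' := funext fun t => by
    induction t with
    | zero => exact h₀
    | succ t ih => rw [(h t).1, (h' t).1, ih]
  exact ⟨rfl, funext fun t => (h t).2.trans (h' t).2.symm⟩

section Lifting

variable {St : Type*} [Fintype St] [DecidableEq St] {m q T : ℕ}

lemma Btil_mulVec_liftSignal (A : Matrix St St ℝ) (B : Matrix St (Fin m) ℝ) (w : ℕ → Fin m → ℝ)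
    (k : ℕ) : Btil T A B *ᵥ liftSignal T w k =
      ∑ i ∈ Finset.range T, (A ^ (T - 1 - i) * B) *ᵥ w (k * T + i) := by
  ext s
  simp only [mulVec, dotProduct, Btil, liftSignal, of_apply, Fintype.sum_prod_type,
    Finset.sum_apply]
  exact Fin.sum_univ_eq_sum_range (fun i => ∑ b, (A ^ (T - 1 - i) * B) s b * w (k * T + i) b) T

lemma Dtil_mulVec_liftSignal (A : Matrix St St ℝ) (B : Matrix St (Fin m) ℝ)
    (C : Matrix (Fin q) St ℝ) (D : Matrix (Fin q) (Fin m) ℝ) (w : ℕ → Fin m → ℝ) (k : ℕ)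
    (p : Fin T × Fin q) : (Dtil T A B C D *ᵥ liftSignal T w k) p =
      (∑ i ∈ Finset.range p.1, (C * A ^ (p.1 - i - 1) * B) *ᵥ w (k * T + i) +
        D *ᵥ w (k * T + p.1)) p.2 := by
  obtain ⟨j, b⟩ := p
  set g : ℕ → ℝ := fun i => if (j : ℕ) = i then (D *ᵥ w (k * T + i)) b
    else if i < j then ((C * A ^ ((j : ℕ) - i - 1) * B) *ᵥ w (k * T + i)) b else 0
  have hlhs : (Dtil T A B C D *ᵥ liftSignal T w k) (j, b) = ∑ i ∈ Finset.range T, g i := by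
    rw [← Fin.sum_univ_eq_sum_range g T]
    simp only [mulVec, dotProduct, Dtil, liftSignal, of_apply, Fintype.sum_prod_type]
    refine Finset.sum_congr rfl fun i _ => ?_
    simp only [g]
    split_ifs <;> simp [mulVec, dotProduct]
  have hvanish : ∀ i ∈ Finset.range T, i ∉ Finset.range (j + 1) → g i = 0 := by
    intro i _ hi
    simp only [Finset.mem_range] at hi
    simp only [g, if_neg (show (j : ℕ) ≠ i by omega), if_neg (show ¬i < j by omega)]
  rw [hlhs, ← Finset.sum_subset (Finset.range_subset_range.2 j.isLt) hvanish,
    Finset.sum_range_succ, Pi.add_apply, Finset.sum_apply]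
  congr 1
  · refine Finset.sum_congr rfl fun i hi => ?_
    simp only [g, if_neg (Finset.mem_range.1 hi).ne', if_pos (Finset.mem_range.1 hi)]
  · simp [g]

end Lifting

section Reset

variable {n₁ n₂ m q T : ℕ} {A : Matrix (Fin n₁ ⊕ Fin n₂) (Fin n₁ ⊕ Fin n₂) ℝ}
  {B : Matrix (Fin n₁ ⊕ Fin n₂) (Fin m) ℝ} {C : Matrix (Fin q) (Fin n₁ ⊕ Fin n₂) ℝ}
  {D : Matrix (Fin q) (Fin m) ℝ} {ξ : ℕ → Fin n₁ ⊕ Fin n₂ → ℝ} {w : ℕ → Fin m → ℝ}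
  {z : ℕ → Fin q → ℝ}

noncomputable def resetTransition (A : Matrix (Fin n₁ ⊕ Fin n₂) (Fin n₁ ⊕ Fin n₂) ℝ) (j : ℕ) :
    Matrix (Fin n₁ ⊕ Fin n₂) (Fin n₁ ⊕ Fin n₂) ℝ :=
  if j = 0 then 1 else A ^ (j - 1) * Ar A

lemma ResetTraj.state_mul_add (h : ResetTraj T A B C D ξ w z) (k : ℕ) {j : ℕ} (hj : j ≤ T) :
    ξ (k * T + j) = resetTransition A j *ᵥ ξ (k * T) +
      ∑ i ∈ Finset.range j, (A ^ (j - 1 - i) * B) *ᵥ w (k * T + i) := by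
  induction j with
  | zero => simp [resetTransition]
  | succ j ih =>
    rw [← add_assoc, (h _).1, Finset.sum_range_succ, Nat.add_sub_cancel, Nat.sub_self, pow_zero,
      Matrix.one_mul, ← add_assoc]
    rcases Nat.eq_zero_or_pos j with rfl | hj₀
    · simp [resetTransition]
    · have hndvd : ¬T ∣ k * T + j := by
        rw [Nat.dvd_add_right (dvd_mul_left T k)]
        exact Nat.not_dvd_of_pos_of_lt hj₀ (by omega)
      rw [if_neg hndvd, ih (by omega), mulVec_add, mulVec_mulVec, mulVec_sum]
      congr 2
      · simp only [resetTransition, if_neg hj₀.ne', if_neg j.succ_ne_zero, ← Matrix.mul_assoc,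
          ← pow_succ', Nat.add_sub_cancel, Nat.sub_add_cancel hj₀]
      · refine Finset.sum_congr rfl fun i hi => ?_
        rw [mulVec_mulVec, ← Matrix.mul_assoc, ← pow_succ']
        congr 3
        have := Finset.mem_range.1 hi
        omega

lemma Crtil_mulVec (v : Fin n₁ ⊕ Fin n₂ → ℝ) (p : Fin T × Fin q) :
    (Crtil T A C *ᵥ v) p = ((C * resetTransition A p.1) *ᵥ v) p.2 := by
  by_cases h : (p.1 : ℕ) = 0 <;>
    simp [mulVec, dotProduct, Crtil, resetTransition, h, Matrix.mul_assoc]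

theorem ResetTraj.isTraj_liftSignal (hT : 0 < T) (h : ResetTraj T A B C D ξ w z) :
    IsTraj (A ^ (T - 1) * Ar A) (Btil T A B) (Crtil T A C) (Dtil T A B C D)
      (fun k => ξ (k * T)) (liftSignal T w) (liftSignal T z) := by
  intro k
  constructor
  · show ξ ((k + 1) * T) = _
    rw [Btil_mulVec_liftSignal, add_one_mul, h.state_mul_add k le_rfl, resetTransition,
      if_neg hT.ne']
  · ext p
    rw [Pi.add_apply, Crtil_mulVec, Dtil_mulVec_liftSignal, liftSignal, (h _).2,
      h.state_mul_add k p.1.isLt.le]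
    simp only [mulVec_add, mulVec_sum, mulVec_mulVec, Matrix.mul_assoc, Pi.add_apply,
      Nat.sub_right_comm]
    ring

lemma exists_resetTraj (T : ℕ) (A : Matrix (Fin n₁ ⊕ Fin n₂) (Fin n₁ ⊕ Fin n₂) ℝ)
    (B : Matrix (Fin n₁ ⊕ Fin n₂) (Fin m) ℝ) (C : Matrix (Fin q) (Fin n₁ ⊕ Fin n₂) ℝ)
    (D : Matrix (Fin q) (Fin m) ℝ) (ξ₀ : Fin n₁ ⊕ Fin n₂ → ℝ) (w : ℕ → Fin m → ℝ) :
    ∃ ξ z, ResetTraj T A B C D ξ w z ∧ ξ 0 = ξ₀ :=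
  ⟨fun t => Nat.rec ξ₀ (fun t ξt => (if T ∣ t then Ar A else A) *ᵥ ξt + B *ᵥ w t) t, _,
    fun _ => ⟨rfl, rfl⟩, rfl⟩

lemma ResetTraj.tendsto_zero (hT : 0 < T) (h : ResetTraj T A B C D ξ w z)
    (hblock : Tendsto (fun k => ξ (k * T)) atTop (𝓝 0)) (hw : Tendsto w atTop (𝓝 0)) :
    Tendsto ξ atTop (𝓝 0) := by
  refine tendsto_of_tendsto_mul_add hT fun j hj => ?_
  simp_rw [h.state_mul_add _ hj.le]
  simpa using (tendsto_mulVec_zero _ hblock).add (tendsto_finsetSum _ fun i _ =>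
    tendsto_mulVec_zero _ (hw.comp (tendsto_mul_add_atTop hT i)))

end Reset

section QuadraticForms

lemma liftSignal_dotProduct_liftSignal {ι R : Type*} [Fintype ι] [Mul R] [AddCommMonoid R]
    {T : ℕ} (v w : ℕ → ι → R) (k : ℕ) :
    liftSignal T v k ⬝ᵥ liftSignal T w k = blockSum T (fun t => v t ⬝ᵥ w t) k := by
  simp only [dotProduct, liftSignal, blockSum, Fintype.sum_prod_type]

lemma dotProduct_one_kronecker_mulVec {τ ι κ R : Type*} [Fintype τ] [DecidableEq τ] [Fintype ι]
    [Fintype κ] [CommSemiring R] (M : Matrix ι κ R) (v : τ × ι → R) (u : τ × κ → R) :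
    v ⬝ᵥ ((1 : Matrix τ τ R) ⊗ₖ M) *ᵥ u =
      ∑ j, (fun i => v (j, i)) ⬝ᵥ M *ᵥ fun i => u (j, i) := by
  simp [dotProduct, mulVec, Fintype.sum_prod_type, one_apply, ite_mul, Finset.sum_ite_irrel]

lemma sumElim_dotProduct_Ptil_mulVec {m q T : ℕ} (Q : Matrix (Fin m) (Fin m) ℝ)
    (S : Matrix (Fin m) (Fin q) ℝ) (R : Matrix (Fin q) (Fin q) ℝ) (v : Fin T × Fin m → ℝ)
    (y : Fin T × Fin q → ℝ) :
    Sum.elim v y ⬝ᵥ Ptil T Q S R *ᵥ Sum.elim v y =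
      ∑ j, Sum.elim (fun i => v (j, i)) (fun i => y (j, i)) ⬝ᵥ
        fromBlocks Q S Sᵀ R *ᵥ Sum.elim (fun i => v (j, i)) (fun i => y (j, i)) := by
  simp only [Ptil, fromBlocks_mulVec, sumElim_dotProduct_sumElim, Sum.elim_comp_inl,
    Sum.elim_comp_inr, dotProduct_add, dotProduct_one_kronecker_mulVec, Finset.sum_add_distrib]

lemma sum_range_Ptil_quadForm_liftSignal {m q T : ℕ} (Q : Matrix (Fin m) (Fin m) ℝ)
    (S : Matrix (Fin m) (Fin q) ℝ) (R : Matrix (Fin q) (Fin q) ℝ) (w : ℕ → Fin m → ℝ)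
    (z : ℕ → Fin q → ℝ) (K : ℕ) :
    ∑ k ∈ Finset.range K, Sum.elim (liftSignal T w k) (liftSignal T z k) ⬝ᵥ
        Ptil T Q S R *ᵥ Sum.elim (liftSignal T w k) (liftSignal T z k) =
      ∑ t ∈ Finset.range (K * T), Sum.elim (w t) (z t) ⬝ᵥ
        fromBlocks Q S Sᵀ R *ᵥ Sum.elim (w t) (z t) := by
  rw [← sum_range_blockSum]
  exact Finset.sum_congr rfl fun k _ => sumElim_dotProduct_Ptil_mulVec Q S R _ _

lemma tendsto_sumElim_dotProduct_mulVec {ι κ : Type*} [Fintype ι] [Fintype κ]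
    (P : Matrix (ι ⊕ κ) (ι ⊕ κ) ℝ) {w : ℕ → ι → ℝ} {z : ℕ → κ → ℝ}
    (hw : Tendsto w atTop (𝓝 0)) (hz : Tendsto z atTop (𝓝 0)) :
    Tendsto (fun t => Sum.elim (w t) (z t) ⬝ᵥ P *ᵥ Sum.elim (w t) (z t)) atTop (𝓝 0) := by
  have hwz : Tendsto (fun t => Sum.elim (w t) (z t)) atTop (𝓝 0) := by
    refine tendsto_pi_nhds.2 ?_
    rintro (i | i)
    exacts [tendsto_pi_nhds.1 hw i, tendsto_pi_nhds.1 hz i]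
  have hcont : Continuous fun v : ι ⊕ κ → ℝ => v ⬝ᵥ P *ᵥ v :=
    continuous_id.dotProduct (continuous_const.matrix_mulVec continuous_id)
  simpa [Function.comp_def] using (hcont.tendsto' 0 0 (by simp)).comp hwz

end QuadraticForms

-- `QuadPerf A B C D P` unfolds to `IsAsymptoticallyStable A ∧ ∃ ε > 0, HasPerfBound A B C D P ε`,
-- and `ResetQuadPerf` likewise to the two reset notions below.
def HasPerfBound {St In Out : Type*} [Fintype St] [Fintype In] [Fintype Out]
    (A : Matrix St St ℝ) (B : Matrix St In ℝ) (C : Matrix Out St ℝ) (D : Matrix Out In ℝ)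
    (P : Matrix (In ⊕ Out) (In ⊕ Out) ℝ) (ε : ℝ) : Prop :=
  ∀ x u y, IsTraj A B C D x u y → x 0 = 0 → Summable (fun t => u t ⬝ᵥ u t) →
    ∃ l : ℝ,
      Tendsto (fun N => ∑ t ∈ Finset.range N,
        Sum.elim (u t) (y t) ⬝ᵥ P.mulVec (Sum.elim (u t) (y t))) atTop (𝓝 l) ∧
      l ≤ -ε * ∑' t, u t ⬝ᵥ u t

section ResetVersusLifted

variable {n₁ n₂ m q T : ℕ} {A : Matrix (Fin n₁ ⊕ Fin n₂) (Fin n₁ ⊕ Fin n₂) ℝ}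
  {B : Matrix (Fin n₁ ⊕ Fin n₂) (Fin m) ℝ} {C : Matrix (Fin q) (Fin n₁ ⊕ Fin n₂) ℝ}
  {D : Matrix (Fin q) (Fin m) ℝ}

def IsResetAsymptoticallyStable (T : ℕ) (A : Matrix (Fin n₁ ⊕ Fin n₂) (Fin n₁ ⊕ Fin n₂) ℝ) :
    Prop :=
  ∀ ξ : ℕ → Fin n₁ ⊕ Fin n₂ → ℝ, (∀ t, ξ (t + 1) = (if T ∣ t then Ar A else A) *ᵥ ξ t) →
    Tendsto ξ atTop (𝓝 0)

def HasResetPerfBound (T : ℕ) (A : Matrix (Fin n₁ ⊕ Fin n₂) (Fin n₁ ⊕ Fin n₂) ℝ)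
    (B : Matrix (Fin n₁ ⊕ Fin n₂) (Fin m) ℝ) (C : Matrix (Fin q) (Fin n₁ ⊕ Fin n₂) ℝ)
    (D : Matrix (Fin q) (Fin m) ℝ) (P : Matrix (Fin m ⊕ Fin q) (Fin m ⊕ Fin q) ℝ) (ε : ℝ) :
    Prop :=
  ∀ ξ w z, ResetTraj T A B C D ξ w z → ξ 0 = 0 → Summable (fun t => w t ⬝ᵥ w t) →
    ∃ l : ℝ,
      Tendsto (fun N => ∑ t ∈ Finset.range N,
        Sum.elim (w t) (z t) ⬝ᵥ P.mulVec (Sum.elim (w t) (z t))) atTop (𝓝 l) ∧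
      l ≤ -ε * ∑' t, w t ⬝ᵥ w t

lemma summable_liftSignal_dotProduct_iff (hT : 0 < T) (w : ℕ → Fin m → ℝ) :
    Summable (fun k => liftSignal T w k ⬝ᵥ liftSignal T w k) ↔ Summable (fun t => w t ⬝ᵥ w t) := by
  simp_rw [liftSignal_dotProduct_liftSignal]
  exact summable_blockSum_iff hT fun t => Finset.sum_nonneg fun i _ => mul_self_nonneg (w t i)

lemma tsum_liftSignal_dotProduct (hT : 0 < T) {w : ℕ → Fin m → ℝ}
    (hw : Summable (fun t => w t ⬝ᵥ w t)) :
    ∑' k, liftSignal T w k ⬝ᵥ liftSignal T w k = ∑' t, w t ⬝ᵥ w t := by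
  simp_rw [liftSignal_dotProduct_liftSignal]
  exact (hw.hasSum.blockSum hT).tsum_eq

theorem isAsymptoticallyStable_lift_of_reset (hT : 0 < T) (h : IsResetAsymptoticallyStable T A) :
    IsAsymptoticallyStable (A ^ (T - 1) * Ar A) := by
  intro x hx
  -- free systems are treated as systems with no inputs and no outputs
  obtain ⟨ξ, z, hξ, hξ₀⟩ :=
    exists_resetTraj T A (0 : Matrix _ (Fin 0) ℝ) (0 : Matrix (Fin 0) _ ℝ) 0 (x 0) 0
  obtain ⟨rfl, -⟩ := (hξ.isTraj_liftSignal hT).unique (x' := x) (y' := liftSignal T z)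
    (fun t => ⟨by simp [hx t], Subsingleton.elim _ _⟩) (by simp [hξ₀])
  exact (h ξ fun t => by simpa using (hξ t).1).comp (tendsto_mul_add_atTop hT 0)

theorem isResetAsymptoticallyStable_of_lift (hT : 0 < T)
    (h : IsAsymptoticallyStable (A ^ (T - 1) * Ar A)) : IsResetAsymptoticallyStable T A := by
  intro ξ hξ
  have hξ' : ResetTraj T A (0 : Matrix _ (Fin 0) ℝ) (0 : Matrix (Fin 0) _ ℝ) 0 ξ 0 0 :=
    fun t => ⟨by simp [hξ t], by simp⟩
  have hlift := hξ'.isTraj_liftSignal hT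
  exact hξ'.tendsto_zero hT (h _ fun k => by simpa using (hlift k).1) tendsto_const_nhds

theorem hasPerfBound_lift_of_reset {Q : Matrix (Fin m) (Fin m) ℝ} {S : Matrix (Fin m) (Fin q) ℝ}
    {R : Matrix (Fin q) (Fin q) ℝ} {ε : ℝ} (hT : 0 < T)
    (h : HasResetPerfBound T A B C D (fromBlocks Q S Sᵀ R) ε) :
    HasPerfBound (A ^ (T - 1) * Ar A) (Btil T A B) (Crtil T A C) (Dtil T A B C D)
      (Ptil T Q S R) ε := by
  intro x u y hxy hx₀ hu
  obtain ⟨w, rfl⟩ := liftSignal_surjective hT u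
  obtain ⟨ξ, z, hξ, hξ₀⟩ := exists_resetTraj T A B C D 0 w
  obtain ⟨rfl, rfl⟩ := (hξ.isTraj_liftSignal hT).unique hxy (by simp [hξ₀, hx₀])
  rw [summable_liftSignal_dotProduct_iff hT] at hu
  obtain ⟨l, hl, hle⟩ := h ξ w z hξ hξ₀ hu
  refine ⟨l, ?_, by rwa [tsum_liftSignal_dotProduct hT hu]⟩
  simpa only [sum_range_Ptil_quadForm_liftSignal, Function.comp_def, add_zero] using
    hl.comp (tendsto_mul_add_atTop hT 0)

theorem hasResetPerfBound_of_lift {Q : Matrix (Fin m) (Fin m) ℝ} {S : Matrix (Fin m) (Fin q) ℝ}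
    {R : Matrix (Fin q) (Fin q) ℝ} {ε : ℝ} (hT : 0 < T)
    (hstab : IsAsymptoticallyStable (A ^ (T - 1) * Ar A))
    (h : HasPerfBound (A ^ (T - 1) * Ar A) (Btil T A B) (Crtil T A C) (Dtil T A B C D)
      (Ptil T Q S R) ε) :
    HasResetPerfBound T A B C D (fromBlocks Q S Sᵀ R) ε := by
  intro ξ w z hξ hξ₀ hw
  have hlift := hξ.isTraj_liftSignal hT
  obtain ⟨l, hl, hle⟩ := h _ _ _ hlift (by simpa using hξ₀)
    ((summable_liftSignal_dotProduct_iff hT w).2 hw)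
  have hw₀ := tendsto_zero_of_summable_dotProduct_self hw
  have hξ₀' : Tendsto ξ atTop (𝓝 0) := hξ.tendsto_zero hT
    (hstab.tendsto_zero (fun k => (hlift k).1) (tendsto_liftSignal hw₀)) hw₀
  have hz₀ : Tendsto z atTop (𝓝 0) := by
    simpa [← funext fun t => (hξ t).2] using
      (tendsto_mulVec_zero C hξ₀').add (tendsto_mulVec_zero D hw₀)
  refine ⟨l, tendsto_sum_range_of_tendsto_sum_range_mul hT
    (tendsto_sumElim_dotProduct_mulVec _ hw₀ hz₀) ?_, by rwa [← tsum_liftSignal_dotProduct hT hw]⟩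
  simpa only [sum_range_Ptil_quadForm_liftSignal] using hl

end ResetVersusLifted

theorem reset_quadPerf_iff_lifted_general {n₁ n₂ m q : ℕ} (T : ℕ) (hT : 1 ≤ T)
    (A : Matrix (Fin n₁ ⊕ Fin n₂) (Fin n₁ ⊕ Fin n₂) ℝ)
    (B : Matrix (Fin n₁ ⊕ Fin n₂) (Fin m) ℝ)
    (C : Matrix (Fin q) (Fin n₁ ⊕ Fin n₂) ℝ) (D : Matrix (Fin q) (Fin m) ℝ)
    (Q : Matrix (Fin m) (Fin m) ℝ) (S : Matrix (Fin m) (Fin q) ℝ)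
    (R : Matrix (Fin q) (Fin q) ℝ) :
    ResetQuadPerf T A B C D (Matrix.fromBlocks Q S Sᵀ R) ↔
      QuadPerf (A ^ (T - 1) * Ar A) (Btil T A B) (Crtil T A C) (Dtil T A B C D)
        (Ptil T Q S R) := by
  constructor
  · rintro ⟨hstab, ε, hε, hperf⟩
    exact ⟨isAsymptoticallyStable_lift_of_reset hT hstab, ε, hε,
      hasPerfBound_lift_of_reset hT hperf⟩
  · rintro ⟨hstab, ε, hε, hperf⟩
    exact ⟨isResetAsymptoticallyStable_of_lift hT hstab, ε, hε,
      hasResetPerfBound_of_lift hT hstab hperf⟩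

/-- The resetting closed loop satisfies quadratic performance specified by `P` if and
only if the lifted reset system `(Ã_r, B̃, C̃_r, D̃)` satisfies quadratic performance
specified by `P̃`. -/
theorem reset_quadPerf_iff_lifted {n₁ n₂ m q : ℕ} (T : ℕ) (hT : 1 ≤ T)
    (A : Matrix (Fin n₁ ⊕ Fin n₂) (Fin n₁ ⊕ Fin n₂) ℝ)
    (B : Matrix (Fin n₁ ⊕ Fin n₂) (Fin m) ℝ)
    (C : Matrix (Fin q) (Fin n₁ ⊕ Fin n₂) ℝ) (D : Matrix (Fin q) (Fin m) ℝ)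
    (Q : Matrix (Fin m) (Fin m) ℝ) (S : Matrix (Fin m) (Fin q) ℝ)
    (R : Matrix (Fin q) (Fin q) ℝ) (hQ : Q.IsSymm) (hR : R.IsSymm) :
    ResetQuadPerf T A B C D (Matrix.fromBlocks Q S Sᵀ R) ↔
      QuadPerf (A ^ (T - 1) * Ar A) (Btil T A B) (Crtil T A C) (Dtil T A B C D)
        (Ptil T Q S R) :=
  reset_quadPerf_iff_lifted_general T hT A B C D Q S R
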